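/- arXiv:1612.01913 — 5 statements merged into one kernel-verified Lean document; each statement's English description precedes it below -/
import Mathlib

section
/- If the pairwise-incident lines o, p, q, r include a ⊓-triad (say p, q, r), then all four lines are coplanar; specifically o lies in the plane p ⊓ q. -/
/-- A 'linear' framework for projective 3-space: a set of lines with an
incidence relation, together with the data of the two incidence-equivalence
classes `SigY`, `SigM` on `Σ(a,b)` and the derived points `pt` and planes `pl`. -/
structure LineGeom where
  L : Type
  dag : L → L → Prop
  dag_refl : ∀ l, dag l l
  dag_symm : ∀ {a b}, dag a b → dag b a
  SigY : L → L → Set L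
  SigM : L → L → Set L
  pt : L → L → Set L
  pl : L → L → Set L

namespace LineGeom

variable (G : LineGeom)

/-- `S†` : the lines incident to every line of `S`. -/
def perp (S : Set G.L) : Set G.L := {x | ∀ s ∈ S, G.dag x s}

/-- `Σ(a,b) = [a b] \ [a b]†`. -/
def Sig (a b : G.L) : Set G.L := G.perp {a, b} \ G.perp (G.perp {a, b})

/-- AXIOMS [1]-[4] together with the defining properties of the two classes
`Σ_⋎(a,b)`, `Σ_⊓(a,b)` and of the point `a ⋎ b` and plane `a ⊓ b`. -/
structure Axioms : Prop where
  ax1 : ∀ l : G.L, ∃ x y z, x ∈ G.perp {l} ∧ y ∈ G.perp {l} ∧ z ∈ G.perp {l} ∧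
      ¬ G.dag x y ∧ ¬ G.dag y z ∧ ¬ G.dag x z
  ax21 : ∀ a b : G.L, a ≠ b → G.dag a b →
      ∃ x ∈ G.perp {a, b}, ∃ y ∈ G.perp {a, b}, ¬ G.dag x y
  ax22 : ∀ a b : G.L, a ≠ b → G.dag a b → ∀ c ∈ G.Sig a b,
      ∀ x ∈ G.perp {a, b, c}, ∀ y ∈ G.perp {a, b, c}, G.dag x y
  ax23 : ∀ a b : G.L, a ≠ b → G.dag a b →
      ∀ x ∈ G.perp {a, b}, ∀ y ∈ G.perp {a, b}, ¬ G.dag x y →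
      G.perp {a, b} = G.perp {a, b, x} ∪ G.perp {a, b, y}
  ax3 : ∀ a b : G.L, a ≠ b → G.dag a b → ∀ c ∈ G.Sig a b,
      ∃ p q : G.L, p ≠ q ∧ G.dag p q ∧ ∃ r ∈ G.Sig p q,
        G.perp {a, b, c} ∩ G.perp {p, q, r} = ∅
  sig_union : ∀ a b : G.L, a ≠ b → G.dag a b →
      G.SigY a b ∪ G.SigM a b = G.Sig a b
  sig_disjoint : ∀ a b : G.L, a ≠ b → G.dag a b →
      G.SigY a b ∩ G.SigM a b = ∅
  sigY_nonempty : ∀ a b : G.L, a ≠ b → G.dag a b → (G.SigY a b).Nonempty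
  sigM_nonempty : ∀ a b : G.L, a ≠ b → G.dag a b → (G.SigM a b).Nonempty
  sig_class : ∀ a b : G.L, a ≠ b → G.dag a b → ∀ x ∈ G.Sig a b, ∀ y ∈ G.Sig a b,
      (((x ∈ G.SigY a b ∧ y ∈ G.SigY a b) ∨ (x ∈ G.SigM a b ∧ y ∈ G.SigM a b))
        ↔ G.dag x y)
  sigY_symm : ∀ a b : G.L, G.SigY a b = G.SigY b a
  sigM_symm : ∀ a b : G.L, G.SigM a b = G.SigM b a
  pt_spec : ∀ a b : G.L, a ≠ b → G.dag a b → ∀ c ∈ G.SigY a b,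
      G.pt a b = G.perp {a, b, c}
  pl_spec : ∀ a b : G.L, a ≠ b → G.dag a b → ∀ c ∈ G.SigM a b,
      G.pl a b = G.perp {a, b, c}
  ax4 : ∀ a b p q : G.L, a ≠ b → G.dag a b → p ≠ q → G.dag p q →
      (G.pt a b ∩ G.pt p q).Nonempty ∧ (G.pl a b ∩ G.pl p q).Nonempty

/-- Three pairwise-incident distinct lines forming a triad. -/
def Triad (a b c : G.L) : Prop :=
  a ≠ b ∧ b ≠ c ∧ a ≠ c ∧ G.dag a b ∧ G.dag b c ∧ G.dag a c ∧
  a ∈ G.Sig b c ∧ b ∈ G.Sig c a ∧ c ∈ G.Sig a b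

/-- A `⊓`-triad. -/
def MTriad (a b c : G.L) : Prop :=
  a ≠ b ∧ b ≠ c ∧ a ≠ c ∧ G.dag a b ∧ G.dag b c ∧ G.dag a c ∧
  a ∈ G.SigM b c ∧ b ∈ G.SigM c a ∧ c ∈ G.SigM a b

/-- A `⋎`-triad. -/
def YTriad (a b c : G.L) : Prop :=
  a ≠ b ∧ b ≠ c ∧ a ≠ c ∧ G.dag a b ∧ G.dag b c ∧ G.dag a c ∧
  a ∈ G.SigY b c ∧ b ∈ G.SigY c a ∧ c ∈ G.SigY a b

/-- A `⊓`-tetrad: each of the four included triples is a `⊓`-triad. -/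
def MTetrad (o p q r : G.L) : Prop :=
  G.MTriad p q r ∧ G.MTriad o q r ∧ G.MTriad o r p ∧ G.MTriad o p q

/-- A `⋎`-tetrad. -/
def YTetrad (o p q r : G.L) : Prop :=
  G.YTriad p q r ∧ G.YTriad o q r ∧ G.YTriad o r p ∧ G.YTriad o p q

/-- A point: a set of lines of the form `x ⋎ y`. -/
def IsPoint (X : Set G.L) : Prop := ∃ x y : G.L, x ≠ y ∧ G.dag x y ∧ X = G.pt x y

/-- A plane: a set of lines of the form `x ⊓ y`. -/
def IsPlane (X : Set G.L) : Prop := ∃ x y : G.L, x ≠ y ∧ G.dag x y ∧ X = G.pl x y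

end LineGeom

open LineGeom

/-- If the pairwise-incident lines `o, p, q, r` include the
`⊓`-triad `p, q, r`, then all four lines are coplanar; specifically `o` lies in
the plane `p ⊓ q`. -/
theorem stmt_0 (G : LineGeom) (hG : G.Axioms) (o p q r : G.L)
    (hop : G.dag o p) (hoq : G.dag o q) (hor : G.dag o r)
    (hpq : G.dag p q) (hpr : G.dag p r) (hqr : G.dag q r)
    (hno : o ≠ p ∧ o ≠ q ∧ o ≠ r)
    (hM : G.MTriad p q r) :
    o ∈ G.pl p q ∧ p ∈ G.pl p q ∧ q ∈ G.pl p q ∧ r ∈ G.pl p q := by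
  obtain ⟨hpq', hqr', hpr', _, _, _, _, _, hrM⟩ := hM
  have hpl : G.pl p q = G.perp {p, q, r} := hG.pl_spec p q hpq' hpq r hrM
  rw [hpl]
  refine ⟨?_, ?_, ?_, ?_⟩ <;>
  · intro s hs
    simp only [Set.mem_insert_iff, Set.mem_singleton_iff] at hs
    rcases hs with rfl | rfl | rfl <;>
      first
        | exact G.dag_refl _
        | assumption
        | exact G.dag_symm (by assumption)
end

section
/- If the pairwise-incident lines o, p, q, r include a ⊓-triad, then they do not include a ⋎-triad. -/
open LineGeom

/-- Key lemma: a line in `SigM a b` and a line in `SigY a b` cannot be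
incident. -/
lemma key (G : LineGeom) (hG : G.Axioms) {a b u v : G.L}
    (hab : a ≠ b) (dab : G.dag a b)
    (hu : u ∈ G.SigM a b) (hv : v ∈ G.SigY a b) (duv : G.dag u v) : False := by
  have hu' : u ∈ G.Sig a b := by
    rw [← hG.sig_union a b hab dab]; exact Or.inr hu
  have hv' : v ∈ G.Sig a b := by
    rw [← hG.sig_union a b hab dab]; exact Or.inl hv
  have hc := (hG.sig_class a b hab dab u hu' v hv').mpr duv
  have hd := hG.sig_disjoint a b hab dab
  rcases hc with ⟨h1, _⟩ | ⟨_, h2⟩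
  · exact Set.eq_empty_iff_forall_notMem.mp hd u ⟨h1, hu⟩
  · exact Set.eq_empty_iff_forall_notMem.mp hd v ⟨hv, h2⟩

/-- If the pairwise-incident lines `o, p, q, r` include a
`⊓`-triad, then they do not include a `⋎`-triad. -/
theorem stmt_1 (G : LineGeom) (hG : G.Axioms) (o p q r : G.L)
    (hop : G.dag o p) (hoq : G.dag o q) (hor : G.dag o r)
    (hpq : G.dag p q) (hpr : G.dag p r) (hqr : G.dag q r)
    (hM : G.MTriad p q r ∨ G.MTriad o q r ∨ G.MTriad o r p ∨ G.MTriad o p q) :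
    ¬ (G.YTriad p q r ∨ G.YTriad o q r ∨ G.YTriad o r p ∨ G.YTriad o p q) := by
  intro hY
  rcases hM with hm | hm | hm | hm <;>
    rcases hY with hy | hy | hy | hy <;>
    obtain ⟨m1, m2, m3, m4, m5, m6, mA, mB, mC⟩ := hm <;>
    obtain ⟨y1, y2, y3, y4, y5, y6, yA, yB, yC⟩ := hy
  -- M pqr
  · exact key G hG m1 m4 mC yC (G.dag_refl r)
  · exact key G hG m2 m5 mA yA (G.dag_symm hop)
  · exact key G hG m3.symm (G.dag_symm m6) mB yA (G.dag_symm hoq)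
  · exact key G hG m1 m4 mC yA (G.dag_symm hor)
  -- M oqr
  · exact key G hG m2 m5 mA yA hop
  · exact key G hG m2 m5 mA yA (G.dag_refl o)
  · exact key G hG m3.symm (G.dag_symm m6) mB (hG.sigY_symm o r ▸ yC) (G.dag_symm hpq)
  · exact key G hG m1 m4 mC (hG.sigY_symm q o ▸ yB) (G.dag_symm hpr)
  -- M orp
  · exact key G hG m2 m5 mA yB hoq
  · exact key G hG m1 m4 mC (hG.sigY_symm r o ▸ yB) hpq
  · exact key G hG m1 m4 mC yC (G.dag_refl p)
  · exact key G hG m3.symm (G.dag_symm m6) mB (hG.sigY_symm o p ▸ yC) (G.dag_symm hqr)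
  -- M opq
  · exact key G hG m2 m5 mA yC hor
  · exact key G hG m3.symm (G.dag_symm m6) mB (hG.sigY_symm o q ▸ yC) hpr
  · exact key G hG m1 m4 mC (hG.sigY_symm p o ▸ yB) hqr
  · exact key G hG m2 m5 mA yA (G.dag_refl o)
end

section
/- If p, q, r is a ⊓-triad, then the three planes q ⊓ r, r ⊓ p, and p ⊓ q coincide. -/
open LineGeom

/-- If `p, q, r` is a `⊓`-triad, then the three planes `q ⊓ r`,
`r ⊓ p` and `p ⊓ q` coincide. -/
theorem stmt_2 (G : LineGeom) (hG : G.Axioms) (p q r : G.L)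
    (hM : G.MTriad p q r) :
    G.pl q r = G.pl r p ∧ G.pl r p = G.pl p q := by
  obtain ⟨hpq, hqr, hpr, dpq, dqr, dpr, hp, hq, hr⟩ := hM
  have e1 := hG.pl_spec q r hqr dqr p hp
  have e2 := hG.pl_spec r p (Ne.symm hpr) (G.dag_symm dpr) q hq
  have e3 := hG.pl_spec p q hpq dpq r hr
  have s1 : ({q, r, p} : Set G.L) = {r, p, q} := by ext x; simp; tauto
  have s2 : ({r, p, q} : Set G.L) = {p, q, r} := by ext x; simp; tauto
  rw [e1, e2, e3, s1, s2]
  exact ⟨rfl, rfl⟩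
end

section
/- If o, p, q, r is a ⊓-tetrad, then the points o ⋎ p and q ⋎ r are distinct (similarly o ⋎ q ≠ r ⋎ p and o ⋎ r ≠ p ⋎ q), so the three diagonals a = (o ⋎ p) ∩ (q ⋎ r), b = (o ⋎ q) ∩ (r ⋎ p), c = (o ⋎ r) ∩ (p ⋎ q) are well-defined lines. -/
open LineGeom

namespace LineGeom

variable {G : LineGeom}

lemma mem_perp2 {a b z : G.L} : z ∈ G.perp {a, b} ↔ G.dag z a ∧ G.dag z b := by
  simp [perp]

lemma mem_perp3 {a b c z : G.L} :
    z ∈ G.perp {a, b, c} ↔ G.dag z a ∧ G.dag z b ∧ G.dag z c := by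
  simp [perp, and_assoc]

lemma sig_subset {a b : G.L} : G.Sig a b ⊆ G.perp {a, b} := Set.diff_subset

lemma sigY_sub (hG : G.Axioms) {a b : G.L} (hab : a ≠ b) (hd : G.dag a b) :
    G.SigY a b ⊆ G.Sig a b := by
  rw [← hG.sig_union a b hab hd]; exact Set.subset_union_left

lemma sigM_sub (hG : G.Axioms) {a b : G.L} (hab : a ≠ b) (hd : G.dag a b) :
    G.SigM a b ⊆ G.Sig a b := by
  rw [← hG.sig_union a b hab hd]; exact Set.subset_union_right

lemma not_dag_YM (hG : G.Axioms) {a b x y : G.L} (hab : a ≠ b) (hd : G.dag a b)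
    (hx : x ∈ G.SigY a b) (hy : y ∈ G.SigM a b) : ¬ G.dag x y := by
  intro h
  have hxS : x ∈ G.Sig a b := sigY_sub hG hab hd hx
  have hyS : y ∈ G.Sig a b := sigM_sub hG hab hd hy
  have hdis := hG.sig_disjoint a b hab hd
  rcases (hG.sig_class a b hab hd x hxS y hyS).mpr h with ⟨_, h2⟩ | ⟨h1, _⟩
  · have : y ∈ G.SigY a b ∩ G.SigM a b := ⟨h2, hy⟩
    rw [hdis] at this; exact this
  · have : x ∈ G.SigY a b ∩ G.SigM a b := ⟨hx, h1⟩
    rw [hdis] at this; exact this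

lemma mem_SigY_of_dag (hG : G.Axioms) {a b x c : G.L} (hab : a ≠ b) (hd : G.dag a b)
    (hxS : x ∈ G.Sig a b) (hc : c ∈ G.SigY a b) (hdxc : G.dag x c) :
    x ∈ G.SigY a b := by
  have hcS : c ∈ G.Sig a b := sigY_sub hG hab hd hc
  rcases (hG.sig_class a b hab hd x hxS c hcS).mpr hdxc with ⟨h1, _⟩ | ⟨_, h2⟩
  · exact h1
  · have : c ∈ G.SigY a b ∩ G.SigM a b := ⟨hc, h2⟩
    rw [hG.sig_disjoint a b hab hd] at this; exact this.elim

lemma mem_SigM_of_dag (hG : G.Axioms) {a b x c : G.L} (hab : a ≠ b) (hd : G.dag a b)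
    (hxS : x ∈ G.Sig a b) (hc : c ∈ G.SigM a b) (hdxc : G.dag x c) :
    x ∈ G.SigM a b := by
  have hcS : c ∈ G.Sig a b := sigM_sub hG hab hd hc
  rcases (hG.sig_class a b hab hd x hxS c hcS).mpr hdxc with ⟨_, h2⟩ | ⟨h1, _⟩
  · have : c ∈ G.SigY a b ∩ G.SigM a b := ⟨h2, hc⟩
    rw [hG.sig_disjoint a b hab hd] at this; exact this.elim
  · exact h1

/-- memberships of `a, b, c` in `perp {a,b,c}` when `c ∈ Σ(a,b)`. -/
lemma rep_mems {a b c : G.L} (hd : G.dag a b) (hcS : c ∈ G.Sig a b) :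
    a ∈ G.perp {a, b, c} ∧ b ∈ G.perp {a, b, c} ∧ c ∈ G.perp {a, b, c} := by
  have hc2 := mem_perp2.mp (sig_subset hcS)
  refine ⟨mem_perp3.mpr ⟨G.dag_refl a, hd, G.dag_symm hc2.1⟩,
    mem_perp3.mpr ⟨G.dag_symm hd, G.dag_refl b, G.dag_symm hc2.2⟩,
    mem_perp3.mpr ⟨hc2.1, hc2.2, G.dag_refl c⟩⟩

/-- `pt a b` as a maximal clique `perp {a,b,c}`, `c ∈ Σ_⋎(a,b)`. -/
lemma pt_rep (hG : G.Axioms) {a b : G.L} (hab : a ≠ b) (hd : G.dag a b) :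
    ∃ c ∈ G.SigY a b, G.pt a b = G.perp {a, b, c} := by
  obtain ⟨c, hc⟩ := hG.sigY_nonempty a b hab hd
  exact ⟨c, hc, hG.pt_spec a b hab hd c hc⟩

lemma pl_rep (hG : G.Axioms) {a b : G.L} (hab : a ≠ b) (hd : G.dag a b) :
    ∃ c ∈ G.SigM a b, G.pl a b = G.perp {a, b, c} := by
  obtain ⟨c, hc⟩ := hG.sigM_nonempty a b hab hd
  exact ⟨c, hc, hG.pl_spec a b hab hd c hc⟩

lemma pt_clique (hG : G.Axioms) {a b : G.L} (hab : a ≠ b) (hd : G.dag a b) :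
    ∀ x ∈ G.pt a b, ∀ y ∈ G.pt a b, G.dag x y := by
  obtain ⟨c, hc, hrep⟩ := pt_rep hG hab hd
  rw [hrep]
  exact hG.ax22 a b hab hd c (sigY_sub hG hab hd hc)

lemma pl_clique (hG : G.Axioms) {a b : G.L} (hab : a ≠ b) (hd : G.dag a b) :
    ∀ x ∈ G.pl a b, ∀ y ∈ G.pl a b, G.dag x y := by
  obtain ⟨c, hc, hrep⟩ := pl_rep hG hab hd
  rw [hrep]
  exact hG.ax22 a b hab hd c (sigM_sub hG hab hd hc)

lemma left_mem_pt (hG : G.Axioms) {a b : G.L} (hab : a ≠ b) (hd : G.dag a b) :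
    a ∈ G.pt a b ∧ b ∈ G.pt a b := by
  obtain ⟨c, hc, hrep⟩ := pt_rep hG hab hd
  rw [hrep]
  have := rep_mems hd (sigY_sub hG hab hd hc)
  exact ⟨this.1, this.2.1⟩

/-- No point is a plane. -/
lemma not_point_and_plane (hG : G.Axioms) {X : Set G.L}
    (hpt : G.IsPoint X) (hpl : G.IsPlane X) : False := by
  obtain ⟨a, b, hab, hdab, rfl⟩ := hpt
  obtain ⟨x, y, hxy, hdxy, hXpl⟩ := hpl
  obtain ⟨c, hc, hrep⟩ := pt_rep hG hab hdab
  obtain ⟨p, q, hpq, hdpq, r, hrS, hempty⟩ :=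
    hG.ax3 a b hab hdab c (sigY_sub hG hab hdab hc)
  have hrcases : r ∈ G.SigY p q ∪ G.SigM p q := by
    rw [hG.sig_union p q hpq hdpq]; exact hrS
  rcases hrcases with hrY | hrM
  · obtain ⟨z, hz⟩ := (hG.ax4 a b p q hab hdab hpq hdpq).1
    rw [hrep, hG.pt_spec p q hpq hdpq r hrY] at hz
    rw [Set.eq_empty_iff_forall_notMem] at hempty
    exact hempty z hz
  · obtain ⟨z, hz⟩ := (hG.ax4 x y p q hxy hdxy hpq hdpq).2
    rw [← hXpl, hrep, hG.pl_spec p q hpq hdpq r hrM] at hz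
    rw [Set.eq_empty_iff_forall_notMem] at hempty
    exact hempty z hz

/-- A point containing two distinct lines `x, y` is `x ⋎ y` or `x ⊓ y`. -/
lemma pt_eq_pt_or_pl (hG : G.Axioms) {a b x y : G.L} (hab : a ≠ b) (hdab : G.dag a b)
    (hxy : x ≠ y) (hdxy : G.dag x y)
    (hx : x ∈ G.pt a b) (hy : y ∈ G.pt a b) :
    G.pt a b = G.pt x y ∨ G.pt a b = G.pl x y := by
  obtain ⟨c, hc, hrep⟩ := pt_rep hG hab hdab
  have hcS : c ∈ G.Sig a b := sigY_sub hG hab hdab hc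
  have hclique := pt_clique hG hab hdab
  have hmems := rep_mems hdab hcS
  have haK : a ∈ G.pt a b := by rw [hrep]; exact hmems.1
  have hbK : b ∈ G.pt a b := by rw [hrep]; exact hmems.2.1
  have hcK : c ∈ G.pt a b := by rw [hrep]; exact hmems.2.2
  obtain ⟨cY, hcY, hptxy⟩ := pt_rep hG hxy hdxy
  obtain ⟨cM, hcM, hplxy⟩ := pl_rep hG hxy hdxy
  have hcYS : cY ∈ G.Sig x y := sigY_sub hG hxy hdxy hcY
  have hcMS : cM ∈ G.Sig x y := sigM_sub hG hxy hdxy hcM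
  have hnd : ¬ G.dag cY cM := not_dag_YM hG hxy hdxy hcY hcM
  have hsplit := hG.ax23 x y hxy hdxy cY (sig_subset hcYS) cM (sig_subset hcMS) hnd
  -- every member of pt a b lies in perp {x,y}
  have hKsub : ∀ z ∈ G.pt a b, z ∈ G.perp {x, y} := fun z hz =>
    mem_perp2.mpr ⟨hclique z hz x hx, hclique z hz y hy⟩
  have hsplit' : ∀ z ∈ G.pt a b, z ∈ G.pt x y ∨ z ∈ G.pl x y := by
    intro z hz
    have := hKsub z hz
    rw [hsplit] at this
    rcases this with h | h
    · left; rw [hptxy]; exact h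
    · right; rw [hplxy]; exact h
  by_cases hall : ∀ z ∈ G.pt a b, z ∈ G.pt x y
  · left
    apply Set.Subset.antisymm hall
    intro w hw
    have hwcl := pt_clique hG hxy hdxy w hw
    rw [hrep]
    exact mem_perp3.mpr ⟨hwcl a (hall a haK), hwcl b (hall b hbK), hwcl c (hall c hcK)⟩
  · right
    push_neg at hall
    obtain ⟨z0, hz0K, hz0⟩ := hall
    have hz0pl : z0 ∈ G.pl x y := (hsplit' z0 hz0K).resolve_left hz0
    -- z0 ∈ Σ_⊓(x,y)
    have hz0perp : z0 ∈ G.perp {x, y} := hKsub z0 hz0K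
    have hz0Sig : z0 ∈ G.Sig x y := by
      refine ⟨hz0perp, fun hpp => ?_⟩
      have : G.dag z0 cY := hpp cY (sig_subset hcYS)
      have hz0mem : z0 ∈ G.pt x y := by
        rw [hptxy]
        exact mem_perp3.mpr ⟨(mem_perp2.mp hz0perp).1, (mem_perp2.mp hz0perp).2, this⟩
      exact hz0 hz0mem
    have hz0M : z0 ∈ G.SigM x y := by
      apply mem_SigM_of_dag hG hxy hdxy hz0Sig hcM
      have : z0 ∈ G.perp {x, y, cM} := by rw [← hplxy]; exact hz0pl
      exact (mem_perp3.mp this).2.2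
    -- all of pt a b lies in pl x y
    have hallpl : ∀ z ∈ G.pt a b, z ∈ G.pl x y := by
      intro w hwK
      rcases hsplit' w hwK with hwpt | hwpl
      · by_contra hwpl
        have hwperp : w ∈ G.perp {x, y} := hKsub w hwK
        have hwSig : w ∈ G.Sig x y := by
          refine ⟨hwperp, fun hpp => ?_⟩
          have : G.dag w cM := hpp cM (sig_subset hcMS)
          have : w ∈ G.pl x y := by
            rw [hplxy]
            exact mem_perp3.mpr ⟨(mem_perp2.mp hwperp).1, (mem_perp2.mp hwperp).2, this⟩
          exact hwpl this
        have hwY : w ∈ G.SigY x y := by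
          apply mem_SigY_of_dag hG hxy hdxy hwSig hcY
          have : w ∈ G.perp {x, y, cY} := by rw [← hptxy]; exact hwpt
          exact (mem_perp3.mp this).2.2
        exact not_dag_YM hG hxy hdxy hwY hz0M (hclique w hwK z0 hz0K)
      · exact hwpl
    apply Set.Subset.antisymm hallpl
    intro w hw
    have hwcl := pl_clique hG hxy hdxy w hw
    rw [hrep]
    exact mem_perp3.mpr ⟨hwcl a (hallpl a haK), hwcl b (hallpl b hbK),
      hwcl c (hallpl c hcK)⟩

/-- key distinctness: if `m ∈ Σ_⊓(a,b)` then `m ∉ pt a b`. -/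
lemma sigM_not_mem_pt (hG : G.Axioms) {a b m : G.L} (hab : a ≠ b) (hdab : G.dag a b)
    (hm : m ∈ G.SigM a b) : m ∉ G.pt a b := by
  obtain ⟨c, hc, hrep⟩ := pt_rep hG hab hdab
  rw [hrep]
  intro hmem
  exact not_dag_YM hG hab hdab hc hm (G.dag_symm (mem_perp3.mp hmem).2.2)

/-- two distinct points meet in a unique line. -/
lemma pt_inter_unique (hG : G.Axioms) {a b p' q' : G.L}
    (hab : a ≠ b) (hdab : G.dag a b) (hpq : p' ≠ q') (hdpq : G.dag p' q')
    (hne : G.pt a b ≠ G.pt p' q') :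
    ∃! z : G.L, z ∈ G.pt a b ∩ G.pt p' q' := by
  obtain ⟨z, hz⟩ := (hG.ax4 a b p' q' hab hdab hpq hdpq).1
  refine ⟨z, hz, fun w hw => ?_⟩
  by_contra hwz
  have hdwz : G.dag w z := pt_clique hG hab hdab w hw.1 z hz.1
  rcases pt_eq_pt_or_pl hG hab hdab hwz hdwz hw.1 hz.1 with h1 | h1 <;>
    rcases pt_eq_pt_or_pl hG hpq hdpq hwz hdwz hw.2 hz.2 with h2 | h2
  · exact hne (h1.trans h2.symm)
  · exact not_point_and_plane hG ⟨p', q', hpq, hdpq, rfl⟩ ⟨w, z, hwz, hdwz, h2⟩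
  · exact not_point_and_plane hG ⟨a, b, hab, hdab, rfl⟩ ⟨w, z, hwz, hdwz, h1⟩
  · exact hne (h1.trans h2.symm)

end LineGeom

/-- In a `⊓`-tetrad the three pairs of opposite points are
distinct, so the three diagonals are well-defined (unique) lines. -/
theorem stmt_3 (G : LineGeom) (hG : G.Axioms) (o p q r : G.L)
    (hT : G.MTetrad o p q r) :
    G.pt o p ≠ G.pt q r ∧ G.pt o q ≠ G.pt r p ∧ G.pt o r ≠ G.pt p q ∧
    (∃! a : G.L, a ∈ G.pt o p ∩ G.pt q r) ∧
    (∃! b : G.L, b ∈ G.pt o q ∩ G.pt r p) ∧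
    (∃! c : G.L, c ∈ G.pt o r ∩ G.pt p q) := by
  obtain ⟨hpqr, hoqr, horp, hopq⟩ := hT
  obtain ⟨hpq, hqr, hpr, hdpq, hdqr, hdpr, hpM, hqM, hrM⟩ := hpqr
  obtain ⟨hoq, hqr', hor, hdoq, hdqr', hdor, hoM1, hqM1, hrM1⟩ := hoqr
  obtain ⟨hor', hrp, hop', hdor', hdrp, hdop', hoM2, hrM2, hpM2⟩ := horp
  obtain ⟨hop, hpq', hoq', hdop, hdpq', hdoq', hoM3, hpM3, hqM3⟩ := hopq
  -- q ∈ Σ_⊓(o,p), r ∈ Σ_⊓(o,q), p ∈ Σ_⊓(o,r)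
  have h1 : G.pt o p ≠ G.pt q r := by
    intro h
    have hq : q ∈ G.pt q r := (left_mem_pt hG hqr hdqr).1
    rw [← h] at hq
    exact sigM_not_mem_pt hG hop hdop hqM3 hq
  have h2 : G.pt o q ≠ G.pt r p := by
    intro h
    have hr : r ∈ G.pt r p := (left_mem_pt hG hrp hdrp).1
    rw [← h] at hr
    exact sigM_not_mem_pt hG hoq hdoq hrM1 hr
  have h3 : G.pt o r ≠ G.pt p q := by
    intro h
    have hp : p ∈ G.pt p q := (left_mem_pt hG hpq hdpq).1
    rw [← h] at hp
    exact sigM_not_mem_pt hG hor hdor hpM2 hp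
  exact ⟨h1, h2, h3,
    pt_inter_unique hG hop hdop hqr hdqr h1,
    pt_inter_unique hG hoq hdoq hrp hdrp h2,
    pt_inter_unique hG hor hdor hpq hdpq h3⟩
end

section
/- (Dual of Theorem 1) If four pairwise-incident lines include a ⋎-triad, then they are copunctal and do not include a ⊓-triad. -/
open LineGeom


lemma mem_perp3 (G : LineGeom) {w x y c : G.L} (h1 : G.dag w x) (h2 : G.dag w y)
    (h3 : G.dag w c) : w ∈ G.perp {x, y, c} := by
  intro s hs
  simp only [Set.mem_insert_iff, Set.mem_singleton_iff] at hs
  rcases hs with rfl | rfl | rfl <;> assumption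

lemma clash (G : LineGeom) (hG : G.Axioms) {x y u v : G.L}
    (hxy : x ≠ y) (hd : G.dag x y) (hu : u ∈ G.SigY x y) (hv : v ∈ G.SigM x y)
    (huv : G.dag u v) : False := by
  have hsu : u ∈ G.Sig x y := by
    rw [← hG.sig_union x y hxy hd]; exact Or.inl hu
  have hsv : v ∈ G.Sig x y := by
    rw [← hG.sig_union x y hxy hd]; exact Or.inr hv
  have h := (hG.sig_class x y hxy hd u hsu v hsv).mpr huv
  have hdis := hG.sig_disjoint x y hxy hd
  rcases h with ⟨_, hvY⟩ | ⟨huM, _⟩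
  · have : v ∈ G.SigY x y ∩ G.SigM x y := ⟨hvY, hv⟩
    rw [hdis] at this; exact this
  · have : u ∈ G.SigY x y ∩ G.SigM x y := ⟨hu, huM⟩
    rw [hdis] at this; exact this

/-- dual of Theorem 1: If four pairwise-incident lines include a
`⋎`-triad, then they are copunctal and do not include a `⊓`-triad. -/
theorem stmt_6 (G : LineGeom) (hG : G.Axioms) (o p q r : G.L)
    (hop : G.dag o p) (hoq : G.dag o q) (hor : G.dag o r)
    (hpq : G.dag p q) (hpr : G.dag p r) (hqr : G.dag q r)
    (hY : G.YTriad p q r ∨ G.YTriad o q r ∨ G.YTriad o r p ∨ G.YTriad o p q) :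
    (∃ x y : G.L, x ≠ y ∧ G.dag x y ∧
      o ∈ G.pt x y ∧ p ∈ G.pt x y ∧ q ∈ G.pt x y ∧ r ∈ G.pt x y) ∧
    ¬ (G.MTriad p q r ∨ G.MTriad o q r ∨ G.MTriad o r p ∨ G.MTriad o p q) := by
  have hpo := G.dag_symm hop
  have hqo := G.dag_symm hoq
  have hro := G.dag_symm hor
  have hqp := G.dag_symm hpq
  have hrp := G.dag_symm hpr
  have hrq := G.dag_symm hqr
  constructor
  · rcases hY with h | h | h | h
    · obtain ⟨_, hqr', _, _, _, _, hpY, _, _⟩ := h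
      refine ⟨q, r, hqr', hqr, ?_, ?_, ?_, ?_⟩ <;>
        rw [hG.pt_spec q r hqr' hqr p hpY]
      · exact mem_perp3 G hoq hor hop
      · exact mem_perp3 G hpq hpr (G.dag_refl p)
      · exact mem_perp3 G (G.dag_refl q) hqr hqp
      · exact mem_perp3 G hrq (G.dag_refl r) hrp
    · obtain ⟨_, hqr', _, _, _, _, hoY, _, _⟩ := h
      refine ⟨q, r, hqr', hqr, ?_, ?_, ?_, ?_⟩ <;>
        rw [hG.pt_spec q r hqr' hqr o hoY]
      · exact mem_perp3 G hoq hor (G.dag_refl o)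
      · exact mem_perp3 G hpq hpr hpo
      · exact mem_perp3 G (G.dag_refl q) hqr hqo
      · exact mem_perp3 G hrq (G.dag_refl r) hro
    · obtain ⟨_, hrp', _, _, _, _, hoY, _, _⟩ := h
      refine ⟨r, p, hrp', hrp, ?_, ?_, ?_, ?_⟩ <;>
        rw [hG.pt_spec r p hrp' hrp o hoY]
      · exact mem_perp3 G hor hop (G.dag_refl o)
      · exact mem_perp3 G hpr (G.dag_refl p) hpo
      · exact mem_perp3 G hqr hqp hqo
      · exact mem_perp3 G (G.dag_refl r) hrp hro
    · obtain ⟨_, hpq', _, _, _, _, hoY, _, _⟩ := h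
      refine ⟨p, q, hpq', hpq, ?_, ?_, ?_, ?_⟩ <;>
        rw [hG.pt_spec p q hpq' hpq o hoY]
      · exact mem_perp3 G hop hoq (G.dag_refl o)
      · exact mem_perp3 G (G.dag_refl p) hpq hpo
      · exact mem_perp3 G hqp (G.dag_refl q) hqo
      · exact mem_perp3 G hrp hrq hro
  · rintro hM
    rcases hY with hy | hy | hy | hy
    · obtain ⟨hpq', hqr', hpr', _, _, _, hpY, hqY, hrY⟩ := hy
      -- hpY : p ∈ SigY q r, hqY : q ∈ SigY r p, hrY : r ∈ SigY p q
      rcases hM with hm | hm | hm | hm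
      · obtain ⟨_, _, _, _, _, _, hpM, _, _⟩ := hm
        exact clash G hG hqr' hqr hpY hpM (G.dag_refl p)
      · obtain ⟨_, _, _, _, _, _, hoM, _, _⟩ := hm
        exact clash G hG hqr' hqr hpY hoM hpo
      · obtain ⟨_, _, _, _, _, _, hoM, _, _⟩ := hm
        -- hoM : o ∈ SigM r p
        have hqY' : q ∈ G.SigY r p := hqY
        exact clash G hG (Ne.symm hpr') hrp hqY' hoM hqo
      · obtain ⟨_, _, _, _, _, _, hoM, _, _⟩ := hm
        exact clash G hG hpq' hpq hrY hoM hro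
    · obtain ⟨hoq', hqr', hor', _, _, _, hoY, hqY, hrY⟩ := hy
      -- hoY : o ∈ SigY q r, hqY : q ∈ SigY r o, hrY : r ∈ SigY o q
      rcases hM with hm | hm | hm | hm
      · obtain ⟨_, _, _, _, _, _, hpM, _, _⟩ := hm
        exact clash G hG hqr' hqr hoY hpM hop
      · obtain ⟨_, _, _, _, _, _, hoM, _, _⟩ := hm
        exact clash G hG hqr' hqr hoY hoM (G.dag_refl o)
      · obtain ⟨_, _, _, _, _, _, _, _, hpM⟩ := hm
        -- hpM : p ∈ SigM o r
        have hpM' : p ∈ G.SigM r o := by rw [hG.sigM_symm r o]; exact hpM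
        exact clash G hG (Ne.symm hor') hro hqY hpM' hqp
      · obtain ⟨_, _, _, _, _, _, _, hpM, _⟩ := hm
        -- hpM : p ∈ SigM q o
        have hrY' : r ∈ G.SigY q o := by rw [hG.sigY_symm q o]; exact hrY
        exact clash G hG (Ne.symm hoq') hqo hrY' hpM hrp
    · obtain ⟨hor', hrp', hop', _, _, _, hoY, hrY, hpY⟩ := hy
      -- hoY : o ∈ SigY r p, hrY : r ∈ SigY p o, hpY : p ∈ SigY o r
      rcases hM with hm | hm | hm | hm
      · obtain ⟨_, _, _, _, _, _, _, hqM, _⟩ := hm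
        -- hqM : q ∈ SigM r p
        exact clash G hG hrp' hrp hoY hqM hoq
      · obtain ⟨_, _, _, _, _, _, _, hqM, _⟩ := hm
        -- hqM : q ∈ SigM r o
        have hpY' : p ∈ G.SigY r o := by rw [hG.sigY_symm r o]; exact hpY
        exact clash G hG (Ne.symm hor') hro hpY' hqM hpq
      · obtain ⟨_, _, _, _, _, _, hoM, _, _⟩ := hm
        exact clash G hG hrp' hrp hoY hoM (G.dag_refl o)
      · obtain ⟨_, _, _, _, _, _, _, _, hqM⟩ := hm
        -- hqM : q ∈ SigM o p
        have hrY' : r ∈ G.SigY o p := by rw [hG.sigY_symm o p]; exact hrY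
        exact clash G hG hop' hop hrY' hqM hrq
    · obtain ⟨hop', hpq', hoq', _, _, _, hoY, hpY, hqY⟩ := hy
      -- hoY : o ∈ SigY p q, hpY : p ∈ SigY q o, hqY : q ∈ SigY o p
      rcases hM with hm | hm | hm | hm
      · obtain ⟨_, _, _, _, _, _, _, _, hrM⟩ := hm
        -- hrM : r ∈ SigM p q
        exact clash G hG hpq' hpq hoY hrM hor
      · obtain ⟨_, _, _, _, _, _, _, _, hrM⟩ := hm
        -- hrM : r ∈ SigM o q
        have hrM' : r ∈ G.SigM q o := by rw [hG.sigM_symm q o]; exact hrM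
        exact clash G hG (Ne.symm hoq') hqo hpY hrM' hpr
      · obtain ⟨_, _, _, _, _, _, _, hrM, _⟩ := hm
        -- hrM : r ∈ SigM p o
        have hrM' : r ∈ G.SigM o p := by rw [hG.sigM_symm o p]; exact hrM
        exact clash G hG hop' hop hqY hrM' hqr
      · obtain ⟨_, _, _, _, _, _, hoM, _, _⟩ := hm
        exact clash G hG hpq' hpq hoY hoM (G.dag_refl o)
end
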